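/- Let A be a band operator on ℓ²(ℤ) and let A₊ := P_ℕ A P_ℕ restricted to the image of P_ℕ, regarded as a bounded operator on ℓ²(ℕ), where P_ℕ is the orthogonal projection onto span{e₁, e₂, …}. If there exists a sequence (h_m)_{m∈ℕ} of integers tending to +∞ such that the limit operator A_h exists and equals A, then N(A) = N(A₊). -/

import Mathlib

/-!
Compressing to `ℓ²(ℕ)` amounts to restricting the form `x ↦ ⟨x, Ax⟩` to vectors supported in
`{1, 2, …}`, so `N(A₊) ⊆ N(A)`. Conversely, `N(A)` is the closure of the values `⟨u, Au⟩` at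
finitely supported unit vectors `u`. For such `u` the shifted vector `V_{h_m} u` is supported in
`{1, 2, …}` as soon as `h_m` is large, and
`⟨V_{h_m} u, A V_{h_m} u⟩ = ⟨u, V_{-h_m} A V_{h_m} u⟩ → ⟨u, Au⟩` because `A` is its own limit
operator along `h`; hence `⟨u, Au⟩ ∈ N(A₊)`.
-/

noncomputable section
open Filter Complex Topology
open scoped ENNReal

/-- The Hilbert space ℓ²(ℤ). -/
abbrev HZ := lp (fun _ : ℤ => ℂ) 2

/-- The standard orthonormal basis of ℓ²(ℤ). -/
def eZ (i : ℤ) : HZ := lp.single 2 i 1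

/-- Matrix entry `A_{i,j} = ⟨A e_j, e_i⟩` (inner product linear in the first slot,
here written in Mathlib's convention which is conjugate-linear in the first slot). -/
def entry (A : HZ →L[ℂ] HZ) (i j : ℤ) : ℂ := inner ℂ (eZ i) (A (eZ j))

/-- The (closed) numerical range `N(A) = clos {⟨Ax,x⟩ : ‖x‖ = 1}`. -/
def numRange (A : HZ →L[ℂ] HZ) : Set ℂ :=
  closure {z | ∃ x : HZ, ‖x‖ = 1 ∧ (inner ℂ x (A x) : ℂ) = z}

/-- The numerical abscissa `r₀(A) = max {Re z : z ∈ N(A)}`. -/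
def r0 (A : HZ →L[ℂ] HZ) : ℝ := sSup (Complex.re '' numRange A)

/-- The rotated numerical abscissa `r_φ(A) = max {Re z : z ∈ N(e^{iφ}A)}`. -/
def rphi (φ : ℝ) (A : HZ →L[ℂ] HZ) : ℝ := r0 (Complex.exp (φ * Complex.I) • A)

lemma memShift (k : ℤ) (x : HZ) : Memℓp (fun j => x (j - k)) 2 := by
  have h := lp.memℓp x
  rw [memℓp_gen_iff (by norm_num)] at h ⊢
  simpa [Function.comp_def] using ((Equiv.subRight k).summable_iff (f := fun i => ‖x i‖ ^ (2:ℝ≥0∞).toReal)).mpr h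

def shiftLM (k : ℤ) : HZ →ₗ[ℂ] HZ where
  toFun x := ⟨fun j => x (j - k), memShift k x⟩
  map_add' x y := by ext j; simp [lp.coeFn_add] <;> rfl
  map_smul' c x := by ext j; simp [lp.coeFn_smul]

lemma shift_norm (k : ℤ) (x : HZ) : ‖shiftLM k x‖ = ‖x‖ := by
  rw [lp.norm_eq_tsum_rpow (by norm_num) x, lp.norm_eq_tsum_rpow (by norm_num) (shiftLM k x)]
  congr 1
  exact (Equiv.subRight k).tsum_eq (f := fun i => ‖x i‖ ^ (2:ℝ≥0∞).toReal)

/-- The shift operator `V_k` on ℓ²(ℤ), `(V_k x)_j = x_{j-k}`. -/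
def Vshift (k : ℤ) : HZ →L[ℂ] HZ :=
  LinearIsometry.toContinuousLinearMap ⟨shiftLM k, shift_norm k⟩

/-- `B` is a limit operator of `A`: there is a sequence of integers `h` with `|h m| → ∞`
such that `V_{-h_m} A V_{h_m} → B` strongly. -/
def IsLimOp (A B : HZ →L[ℂ] HZ) : Prop :=
  ∃ h : ℕ → ℤ, Tendsto (fun m => |h m|) atTop atTop ∧
    ∀ x : HZ, Tendsto (fun m => Vshift (-(h m)) (A (Vshift (h m) x))) atTop (𝓝 (B x))

/-- The operator spectrum: the set of all limit operators of `A`. -/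
def opSpec (A : HZ →L[ℂ] HZ) : Set (HZ →L[ℂ] HZ) := {B | IsLimOp A B}

/-- A band operator: only finitely many diagonals are nonzero. -/
def IsBandOp (A : HZ →L[ℂ] HZ) : Prop :=
  ∃ N : ℕ, ∀ i j : ℤ, (N : ℤ) < |i - j| → entry A i j = 0

/-- `M(U_n, …, U_m)`: the k-th diagonal has entries in `U k` for `n ≤ k ≤ m`,
and all other diagonals vanish. -/
def Mset (n m : ℤ) (U : ℤ → Set ℂ) : Set (HZ →L[ℂ] HZ) :=
  {A | ∀ i k : ℤ, (n ≤ k → k ≤ m → entry A (i + k) i ∈ U k) ∧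
      (¬(n ≤ k ∧ k ≤ m) → entry A (i + k) i = 0)}

/-- The orthogonal projection `P_{k,l}` onto `span{e_k, …, e_l}`. -/
def projIcc (k l : ℤ) : HZ →L[ℂ] HZ :=
  ∑ i ∈ Finset.Icc k l, (innerSL ℂ (eZ i)).smulRight (eZ i)

/-- The finite matrix `b` placed in `ℓ²(ℤ)` with rows/columns at positions `k, …, k+s`. -/
def embedMat (k : ℤ) (s : ℕ) (b : Fin (s+1) → Fin (s+1) → ℂ) : HZ →L[ℂ] HZ :=
  ∑ p : Fin (s+1), ∑ q : Fin (s+1),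
    b p q • (innerSL ℂ (eZ (k + (q : ℤ)))).smulRight (eZ (k + (p : ℤ)))

/-- A finite square matrix whose k-th diagonal entries lie in `U k` for `n ≤ k ≤ m`
and whose remaining entries vanish. -/
def finPattern (n m : ℤ) (U : ℤ → Set ℂ) (s : ℕ) (b : Fin (s+1) → Fin (s+1) → ℂ) : Prop :=
  ∀ p q : Fin (s+1), (n ≤ (p : ℤ) - (q : ℤ) → (p : ℤ) - (q : ℤ) ≤ m →
      b p q ∈ U ((p : ℤ) - (q : ℤ))) ∧
    (¬(n ≤ (p : ℤ) - (q : ℤ) ∧ (p : ℤ) - (q : ℤ) ≤ m) → b p q = 0)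

/-- Pseudo-ergodic operators `ΨE(U_n, …, U_m)`. -/
def PsiE (n m : ℤ) (U : ℤ → Set ℂ) : Set (HZ →L[ℂ] HZ) :=
  {A | A ∈ Mset n m U ∧ ∀ ε > (0:ℝ), ∀ (s : ℕ) (b : Fin (s+1) → Fin (s+1) → ℂ),
    finPattern n m U s b → ∃ k : ℤ,
      ‖projIcc k (k + s) ∘L A ∘L projIcc k (k + s) - embedMat k s b‖ ≤ ε}

/-- The essential spectrum: the set of `λ` such that `A - λI` is not Fredholm. -/
def essSpec (A : HZ →L[ℂ] HZ) : Set ℂ :=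
  {lam | ¬(FiniteDimensional ℂ (LinearMap.ker ((A - lam • (1 : HZ →L[ℂ] HZ) : HZ →L[ℂ] HZ) : HZ →ₗ[ℂ] HZ)) ∧
      FiniteDimensional ℂ ((LinearMap.range ((A - lam • (1 : HZ →L[ℂ] HZ) : HZ →L[ℂ] HZ) : HZ →ₗ[ℂ] HZ))ᗮ))}

/-- The Hilbert space ℓ²(ℕ). -/
abbrev HN := lp (fun _ : ℕ => ℂ) 2

def eN (i : ℕ) : HN := lp.single 2 i 1

def entryN (A : HN →L[ℂ] HN) (i j : ℕ) : ℂ := inner ℂ (eN i) (A (eN j))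

def numRangeN (A : HN →L[ℂ] HN) : Set ℂ :=
  closure {z | ∃ x : HN, ‖x‖ = 1 ∧ (inner ℂ x (A x) : ℂ) = z}

def r0N (A : HN →L[ℂ] HN) : ℝ := sSup (Complex.re '' numRangeN A)

namespace lp

variable {𝕜 : Type*} [RCLike 𝕜] {ι κ : Type*} {f : ι → κ}

lemma norm_rpow_extend_zero (x : ι → 𝕜) {r : ℝ} (hr : r ≠ 0) :
    (fun j => ‖Function.extend f x 0 j‖ ^ r) = Function.extend f (fun i => ‖x i‖ ^ r) 0 := by
  funext j
  rw [Function.apply_extend (fun z : 𝕜 => ‖z‖ ^ r)]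
  simp [Function.comp_def, Real.zero_rpow hr, Pi.zero_def]

lemma memℓp_extend_zero (hf : f.Injective) (x : lp (fun _ : ι => 𝕜) 2) :
    Memℓp (Function.extend f x 0) 2 := by
  have hx := lp.memℓp x
  rw [memℓp_gen_iff (by norm_num)] at hx ⊢
  rwa [norm_rpow_extend_zero _ (by norm_num), summable_extend_zero hf]

def extendZero (hf : f.Injective) : lp (fun _ : ι => 𝕜) 2 →ₗᵢ[𝕜] lp (fun _ : κ => 𝕜) 2 where
  toFun x := ⟨Function.extend f x 0, memℓp_extend_zero hf x⟩
  map_add' x y := Subtype.ext ((Function.ExtendByZero.linearMap 𝕜 f).map_add x y)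
  map_smul' c x := Subtype.ext ((Function.ExtendByZero.linearMap 𝕜 f).map_smul c x)
  norm_map' x := by
    rw [lp.norm_eq_tsum_rpow (by norm_num), lp.norm_eq_tsum_rpow (by norm_num)]
    simp only [LinearMap.coe_mk, AddHom.coe_mk]
    rw [norm_rpow_extend_zero _ (by norm_num), tsum_extend_zero hf]

variable (hf : f.Injective)

lemma extendZero_apply_self (x : lp (fun _ : ι => 𝕜) 2) (i : ι) :
    extendZero hf x (f i) = x i := hf.extend_apply _ _ _

lemma extendZero_apply_of_notMem_range (x : lp (fun _ : ι => 𝕜) 2) {j : κ}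
    (hj : j ∉ Set.range f) : extendZero hf x j = 0 :=
  Function.extend_apply' _ _ _ fun h => hj h

lemma extendZero_single [DecidableEq ι] [DecidableEq κ] (i : ι) (a : 𝕜) :
    extendZero hf (lp.single 2 i a) = lp.single 2 (f i) a := by
  ext j
  by_cases hj : j ∈ Set.range f
  · obtain ⟨i', rfl⟩ := hj
    simp only [extendZero_apply_self, lp.single_apply, Pi.single_apply, hf.eq_iff]
  · rw [extendZero_apply_of_notMem_range hf _ hj, lp.single_apply_ne]
    rintro rfl; exact hj ⟨i, rfl⟩

lemma exists_extendZero_eq (w : lp (fun _ : κ => 𝕜) 2) (hw : ∀ j ∉ Set.range f, w j = 0) :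
    ∃ x, extendZero hf x = w := by
  have hmem : Memℓp (w ∘ f) 2 := by
    have := lp.memℓp w
    rw [memℓp_gen_iff (by norm_num)] at this ⊢
    exact (hf.summable_iff fun j hj => by simp [hw j hj]).mpr this
  refine ⟨⟨w ∘ f, hmem⟩, lp.ext (funext fun j => ?_)⟩
  by_cases hj : j ∈ Set.range f
  · obtain ⟨i, rfl⟩ := hj
    exact extendZero_apply_self hf _ i
  · rw [extendZero_apply_of_notMem_range hf _ hj, hw j hj]

lemma inner_extendZero_of_comp_eq {x v : lp (fun _ : ι => 𝕜) 2} {w : lp (fun _ : κ => 𝕜) 2}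
    (h : ∀ i, w (f i) = v i) : inner 𝕜 (extendZero hf x) w = inner 𝕜 x v := by
  rw [lp.inner_eq_tsum, lp.inner_eq_tsum, ← tsum_extend_zero hf]
  congr 1
  funext j
  by_cases hj : j ∈ Set.range f
  · obtain ⟨i, rfl⟩ := hj
    rw [extendZero_apply_self, hf.extend_apply, h]
  · rw [extendZero_apply_of_notMem_range hf _ hj, Function.extend_apply' _ _ _ fun h => hj h,
      inner_zero_left, Pi.zero_apply]

lemma mem_closure_unit_finite_support (x : lp (fun _ : ι => 𝕜) 2) (hx : ‖x‖ = 1) :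
    x ∈ closure {u : lp (fun _ : ι => 𝕜) 2 | ‖u‖ = 1 ∧ ∃ F : Finset ι, ∀ j ∉ F, u j = 0} := by
  classical
  set s : Finset ι → lp (fun _ : ι => 𝕜) 2 := fun F => ∑ i ∈ F, lp.single 2 i (x i)
  have hs : Tendsto s atTop (𝓝 x) := lp.hasSum_single (by norm_num) x
  have hx0 : x ≠ 0 := by rintro rfl; simp at hx
  have hnormalize : Tendsto (fun F => ‖s F‖⁻¹ • s F) atTop (𝓝 x) := by
    simpa [hx] using (hs.norm.inv₀ (norm_ne_zero_iff.mpr hx0)).smul hs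
  refine mem_closure_of_tendsto hnormalize ?_
  filter_upwards [hs.eventually_ne hx0] with F hF
  refine ⟨norm_smul_inv_norm hF, F, fun j hj => ?_⟩
  have hsupp : s F j = 0 := by
    simp only [s, lp.coeFn_sum, Finset.sum_apply]
    exact Finset.sum_eq_zero fun i hi => lp.single_apply_ne 2 i _ fun hji => hj (hji ▸ hi)
  rw [lp.coeFn_smul, Pi.smul_apply, hsupp, smul_zero]

end lp

lemma Vshift_apply (k : ℤ) (x : HZ) (j : ℤ) : Vshift k x j = x (j - k) := rfl

lemma norm_Vshift (k : ℤ) (x : HZ) : ‖Vshift k x‖ = ‖x‖ := shift_norm k x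

lemma inner_Vshift_Vshift (k : ℤ) (x y : HZ) :
    inner ℂ (Vshift k x) (Vshift k y) = inner ℂ x y :=
  LinearIsometry.inner_map_map ⟨shiftLM k, shift_norm k⟩ x y

lemma Vshift_Vshift_neg (k : ℤ) (x : HZ) : Vshift k (Vshift (-k) x) = x := by
  ext j
  simp [Vshift_apply]

lemma inner_Vshift_neg (k : ℤ) (x y : HZ) :
    inner ℂ x (Vshift (-k) y) = inner ℂ (Vshift k x) y := by
  rw [← inner_Vshift_Vshift k, Vshift_Vshift_neg]

lemma cast_add_one_injective : Function.Injective fun n : ℕ => (n : ℤ) + 1 :=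
  fun a b h => by simpa using h

def embedPos : HN →ₗᵢ[ℂ] HZ := lp.extendZero cast_add_one_injective

lemma embedPos_eN (n : ℕ) : embedPos (eN n) = eZ ((n : ℤ) + 1) :=
  lp.extendZero_single cast_add_one_injective n 1

lemma exists_embedPos_eq (w : HZ) (hw : ∀ j ≤ 0, w j = 0) : ∃ y, embedPos y = w :=
  lp.exists_extendZero_eq cast_add_one_injective w fun j hj =>
    hw j (by by_contra! h; exact hj ⟨(j - 1).toNat, by simp only; omega⟩)

def IsCompression (A : HZ →L[ℂ] HZ) (Aplus : HN →L[ℂ] HN) : Prop :=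
  ∀ i j : ℕ, entryN Aplus i j = entry A ((i : ℤ) + 1) ((j : ℤ) + 1)

section Compression

variable {A : HZ →L[ℂ] HZ} {Aplus : HN →L[ℂ] HN}

lemma compression_apply (hAplus : IsCompression A Aplus) (y : HN) (n : ℕ) :
    A (embedPos y) ((n : ℤ) + 1) = Aplus y n := by
  let evalZ : HZ →L[ℂ] ℂ := innerSL ℂ (eZ ((n : ℤ) + 1))
  let evalN : HN →L[ℂ] ℂ := innerSL ℂ (eN n)
  have key : evalZ ∘L A ∘L embedPos.toContinuousLinearMap = evalN ∘L Aplus := by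
    refine lp.ext_continuousLinearMap (by norm_num) fun j => ContinuousLinearMap.ext_ring ?_
    have h1 : lp.single 2 j (1 : ℂ) = eN j := rfl
    simpa [evalZ, evalN, h1, embedPos_eN, entry, entryN] using (hAplus n j).symm
  simpa [evalZ, evalN, eZ, eN, lp.inner_single_left] using congr($key y)

lemma inner_embedPos_apply_embedPos (hAplus : IsCompression A Aplus) (x y : HN) :
    inner ℂ (embedPos x) (A (embedPos y)) = inner ℂ x (Aplus y) :=
  lp.inner_extendZero_of_comp_eq _ (compression_apply hAplus y)

lemma numRangeN_subset_numRange (hAplus : IsCompression A Aplus) :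
    numRangeN Aplus ⊆ numRange A := by
  refine closure_mono ?_
  rintro _ ⟨y, hy, rfl⟩
  exact ⟨embedPos y, by rw [embedPos.norm_map, hy], inner_embedPos_apply_embedPos hAplus y y⟩

lemma inner_apply_mem_numRangeN_of_nonpos_eq_zero (hAplus : IsCompression A Aplus) {w : HZ}
    (hw1 : ‖w‖ = 1) (hw : ∀ j ≤ 0, w j = 0) :
    inner ℂ w (A w) ∈ numRangeN Aplus := by
  obtain ⟨y, rfl⟩ := exists_embedPos_eq w hw
  rw [inner_embedPos_apply_embedPos hAplus]
  exact subset_closure ⟨y, by rwa [← embedPos.norm_map], rfl⟩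

lemma numRange_subset_of_finite_support {S : Set ℂ} (hS : IsClosed S)
    (hA : ∀ u : HZ, ‖u‖ = 1 → (∃ F : Finset ℤ, ∀ j ∉ F, u j = 0) → inner ℂ u (A u) ∈ S) :
    numRange A ⊆ S := by
  refine closure_minimal ?_ hS
  rintro _ ⟨x, hx, rfl⟩
  have hcont : Continuous fun u : HZ => inner ℂ u (A u) := by fun_prop
  exact hS.closure_subset (map_mem_closure (f := fun u : HZ => inner ℂ u (A u)) hcont
    (lp.mem_closure_unit_finite_support x hx) fun u ⟨hu, hsupp⟩ => hA u hu hsupp)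

lemma inner_apply_mem_numRangeN_of_finite_support (hAplus : IsCompression A Aplus)
    {h : ℕ → ℤ} (hh : Tendsto h atTop atTop)
    (hlim : ∀ x : HZ,
      Tendsto (fun m => Vshift (-(h m)) (A (Vshift (h m) x))) atTop (𝓝 (A x)))
    {u : HZ} (hu : ‖u‖ = 1) {F : Finset ℤ} (hF : ∀ j ∉ F, u j = 0) :
    inner ℂ u (A u) ∈ numRangeN Aplus := by
  obtain ⟨M, hM⟩ := F.bddBelow
  refine isClosed_closure.mem_of_tendsto (tendsto_const_nhds.inner (hlim u)) ?_
  filter_upwards [hh.eventually_gt_atTop (-M)] with m hm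
  rw [inner_Vshift_neg]
  refine inner_apply_mem_numRangeN_of_nonpos_eq_zero hAplus (by rw [norm_Vshift, hu]) ?_
  intro j hj
  rw [Vshift_apply]
  exact hF _ fun hmem => by linarith [hM hmem]

end Compression

theorem numRange_eq_numRange_compression_general
    (A : HZ →L[ℂ] HZ)
    (h : ℕ → ℤ) (hh : Tendsto h atTop atTop)
    (hlim : ∀ x : HZ,
      Tendsto (fun m => Vshift (-(h m)) (A (Vshift (h m) x))) atTop (𝓝 (A x)))
    (Aplus : HN →L[ℂ] HN)
    (hAplus : ∀ i j : ℕ, entryN Aplus i j = entry A ((i : ℤ) + 1) ((j : ℤ) + 1)) :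
    numRange A = numRangeN Aplus :=
  (numRange_subset_of_finite_support isClosed_closure fun _ hu ⟨_, hF⟩ =>
    inner_apply_mem_numRangeN_of_finite_support hAplus hh hlim hu hF).antisymm
    (numRangeN_subset_numRange hAplus)

/-- If a band operator `A` on `ℓ²(ℤ)` is its own limit operator along a
sequence of integers tending to `+∞`, then `N(A) = N(A₊)`, where `A₊` is the compression of
`A` to `ℓ²(ℕ)` (the operator whose matrix entries are `(A₊)_{i,j} = A_{i+1,j+1}`). -/
theorem numRange_eq_numRange_compression
    (A : HZ →L[ℂ] HZ) (hA : IsBandOp A)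
    (h : ℕ → ℤ) (hh : Tendsto h atTop atTop)
    (hlim : ∀ x : HZ,
      Tendsto (fun m => Vshift (-(h m)) (A (Vshift (h m) x))) atTop (𝓝 (A x)))
    (Aplus : HN →L[ℂ] HN)
    (hAplus : ∀ i j : ℕ, entryN Aplus i j = entry A ((i : ℤ) + 1) ((j : ℤ) + 1)) :
    numRange A = numRangeN Aplus :=
  numRange_eq_numRange_compression_general A h hh hlim Aplus hAplus
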